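/- Let q = 2^r and consider, for k ≥ 0 and l ∈ ℤ with k + 2 ≡ 2l mod (q-1), the set P(k+2, l, q) = { j ∈ ℕ : 0 ≤ j < k/2, j ≡ l - 1 mod (q - 1), and C(k - j, j) is odd }. Then #P(k+2, l, q) = O(k^{log₂ φ}) where φ = (1 + √5)/2; concretely, #P(k+2, l, q) ≤ a_k where a_k is the Stern-Brocot sequence, and a_k ≤ F_{N+1} whenever k ≤ 2^N - 1. -/

import Mathlib

/-!
Lucas' theorem for `p = 2` gives `C(2a + e, 2b + f) ≡ C(e, f) C(a, b) (mod 2)`. Splitting the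
shallow diagonal `j ↦ C(n - j, j)` of Pascal's triangle by the parity of `j` then shows that the
number of its odd entries satisfies the Stern–Brocot recurrence, so it equals `a_n`; the set
`P(k+2, l, q)` is a subset of the odd entries of the `k`-th diagonal. For the second bound, induct
on `N` with the stronger invariant `a_{k+1} + a_k ≤ F_{N+2}` for `k + 1 < 2^N`.
-/

open Finset

/-- The Stern-Brocot sequence: `a₀ = a₁ = 1`, `a_{2n} = a_n + a_{n-1}` and `a_{2n+1} = a_n`
for `n ≥ 1`. -/
def stern : ℕ → ℕ
  | 0 => 1
  | 1 => 1
  | n + 2 =>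
    if (n + 2) % 2 = 0 then stern ((n + 2) / 2) + stern ((n + 2) / 2 - 1)
    else stern ((n + 2) / 2)
decreasing_by all_goals omega

open scoped Classical

theorem stern_zero : stern 0 = 1 := by
  rw [stern]

theorem stern_two_mul_add_one (s : ℕ) : stern (2 * s + 1) = stern s := by
  rcases s with _ | s
  · simp [stern]
  · rw [show 2 * (s + 1) + 1 = 2 * s + 1 + 2 by ring, stern,
      if_neg (by omega), show (2 * s + 1 + 2) / 2 = s + 1 by omega]

theorem stern_two_mul_add_two (s : ℕ) : stern (2 * s + 2) = stern (s + 1) + stern s := by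
  rw [stern, if_pos (by omega), show (2 * s + 2) / 2 = s + 1 by omega, Nat.add_sub_cancel]

theorem eq_stern_of_recurrence {f : ℕ → ℕ} (h0 : f 0 = 1) (h1 : ∀ s, f (2 * s + 1) = f s)
    (h2 : ∀ s, f (2 * s + 2) = f (s + 1) + f s) : f = stern := by
  funext n
  induction n using Nat.strong_induction_on with
  | _ n ih =>
    obtain ⟨s, rfl | rfl⟩ := Nat.even_or_odd' n
    · rcases s with _ | s
      · rw [h0, stern_zero]
      · rw [show 2 * (s + 1) = 2 * s + 2 by ring, h2, stern_two_mul_add_two,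
          ih (s + 1) (by omega), ih s (by omega)]
    · rw [h1, stern_two_mul_add_one, ih s (by omega)]

theorem stern_le_fib_and_add_le_fib (N : ℕ) :
    (∀ k < 2 ^ N, stern k ≤ Nat.fib (N + 1)) ∧
      ∀ k, k + 1 < 2 ^ N → stern (k + 1) + stern k ≤ Nat.fib (N + 2) := by
  induction N with
  | zero => exact ⟨fun k hk => by simp_all [stern_zero], fun k hk => by simp at hk⟩
  | succ N ih =>
    obtain ⟨hle, hadd⟩ := ih
    rw [show N + 1 + 1 = N + 2 from rfl, show N + 1 + 2 = N + 3 from rfl]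
    have hpow : 2 ^ (N + 1) = 2 * 2 ^ N := by ring
    have hfib : Nat.fib (N + 3) = Nat.fib (N + 1) + Nat.fib (N + 2) := Nat.fib_add_two
    have hmono : Nat.fib (N + 1) ≤ Nat.fib (N + 2) := Nat.fib_mono (by omega)
    have hpos : 1 ≤ Nat.fib (N + 1) := Nat.fib_pos.2 (by omega)
    refine ⟨fun k hk => ?_, fun k hk => ?_⟩
    · obtain ⟨s, rfl | rfl⟩ := Nat.even_or_odd' k
      · rcases s with _ | s
        · rw [stern_zero]; omega
        · rw [show 2 * (s + 1) = 2 * s + 2 by ring, stern_two_mul_add_two]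
          exact hadd s (by omega)
      · rw [stern_two_mul_add_one]
        exact (hle s (by omega)).trans hmono
    · obtain ⟨s, rfl | rfl⟩ := Nat.even_or_odd' k
      · rw [stern_two_mul_add_one]
        rcases s with _ | s
        · rw [stern_zero]; omega
        · rw [show 2 * (s + 1) = 2 * s + 2 by ring, stern_two_mul_add_two]
          have := hle (s + 1) (by omega)
          have := hadd s (by omega)
          omega
      · rw [show 2 * s + 1 + 1 = 2 * s + 2 by ring, stern_two_mul_add_two, stern_two_mul_add_one]
        have := hle s (by omega)
        have := hadd s (by omega)
        omega

theorem stern_le_fib {N k : ℕ} (hk : k < 2 ^ N) : stern k ≤ Nat.fib (N + 1) :=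
  (stern_le_fib_and_add_le_fib N).1 k hk

theorem Finset.sum_range_two_mul {M : Type*} [AddCommMonoid M] (f : ℕ → M) (m : ℕ) :
    ∑ j ∈ range (2 * m), f j = ∑ i ∈ range m, (f (2 * i) + f (2 * i + 1)) := by
  induction m with
  | zero => simp
  | succ m ih =>
    rw [show 2 * (m + 1) = 2 * m + 1 + 1 by ring, sum_range_succ, sum_range_succ, ih,
      sum_range_succ, add_assoc]

theorem Nat.choose_two_mul_add_mod_two (a b e f : ℕ) (he : e < 2) (hf : f < 2) :
    (2 * a + e).choose (2 * b + f) % 2 = e.choose f * a.choose b % 2 := by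
  have : Fact (Nat.Prime 2) := ⟨Nat.prime_two⟩
  rw [Choose.choose_modEq_choose_mod_mul_choose_div_nat (p := 2)]
  congr 3 <;> omega

def shallowDiagonalOddCount (n : ℕ) : ℕ :=
  ∑ j ∈ range (n + 1), (n - j).choose j % 2

theorem shallowDiagonalOddCount_two_mul_add_one (s : ℕ) :
    shallowDiagonalOddCount (2 * s + 1) = shallowDiagonalOddCount s := by
  rw [shallowDiagonalOddCount, show 2 * s + 1 + 1 = 2 * (s + 1) by ring, sum_range_two_mul]
  refine sum_congr rfl fun i hi => ?_
  have hi : i ≤ s := Nat.lt_succ_iff.1 (mem_range.1 hi)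
  have hodd := Nat.choose_two_mul_add_mod_two (s - i) i 1 0 (by norm_num) (by norm_num)
  have heven := Nat.choose_two_mul_add_mod_two (s - i) i 0 1 (by norm_num) (by norm_num)
  simp only [add_zero, Nat.choose_zero_right, Nat.choose_zero_succ, one_mul, zero_mul,
    Nat.zero_mod] at hodd heven
  rw [show 2 * s + 1 - 2 * i = 2 * (s - i) + 1 by omega,
    show 2 * s + 1 - (2 * i + 1) = 2 * (s - i) by omega, hodd, heven, add_zero]

theorem shallowDiagonalOddCount_two_mul_add_two (s : ℕ) :
    shallowDiagonalOddCount (2 * s + 2) =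
      shallowDiagonalOddCount (s + 1) + shallowDiagonalOddCount s := by
  rw [shallowDiagonalOddCount, sum_range_succ, Nat.sub_self,
    Nat.choose_eq_zero_of_lt (by omega : 0 < 2 * s + 2), show 2 * s + 2 = 2 * (s + 1) by ring,
    sum_range_two_mul, shallowDiagonalOddCount, sum_range_succ _ (s + 1), Nat.sub_self,
    Nat.choose_eq_zero_of_lt (by omega : 0 < s + 1), shallowDiagonalOddCount]
  simp only [Nat.zero_mod, add_zero, ← sum_add_distrib]
  refine sum_congr rfl fun i hi => ?_
  have hi : i ≤ s := Nat.lt_succ_iff.1 (mem_range.1 hi)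
  have heven := Nat.choose_two_mul_add_mod_two (s + 1 - i) i 0 0 (by norm_num) (by norm_num)
  have hodd := Nat.choose_two_mul_add_mod_two (s - i) i 1 1 (by norm_num) (by norm_num)
  simp only [add_zero, Nat.choose_self, one_mul] at heven hodd
  rw [show 2 * (s + 1) - 2 * i = 2 * (s + 1 - i) by omega,
    show 2 * (s + 1) - (2 * i + 1) = 2 * (s - i) + 1 by omega, heven, hodd]

theorem shallowDiagonalOddCount_eq_stern : shallowDiagonalOddCount = stern :=
  eq_stern_of_recurrence (by simp [shallowDiagonalOddCount])
    shallowDiagonalOddCount_two_mul_add_one shallowDiagonalOddCount_two_mul_add_two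

theorem card_filter_odd_choose_eq_stern (n : ℕ) :
    #{j ∈ range (n + 1) | Odd ((n - j).choose j)} = stern n := by
  rw [← shallowDiagonalOddCount_eq_stern, shallowDiagonalOddCount, card_filter]
  refine sum_congr rfl fun j _ => ?_
  rcases Nat.mod_two_eq_zero_or_one ((n - j).choose j) with h | h <;> simp [Nat.odd_iff, h]

theorem stmt18_general (r : ℕ) (k : ℕ) (l : ℤ) (N : ℕ) :
    ((Finset.range k).filter
        (fun j => 2 * j < k ∧ (j : ℤ) % ((2 : ℤ) ^ r - 1) = (l - 1) % ((2 : ℤ) ^ r - 1) ∧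
          Odd (Nat.choose (k - j) j))).card ≤ stern k ∧
      (Finset.range (2 ^ N)).sup stern ≤ Nat.fib (N + 1) := by
  constructor
  · calc _ ≤ #{j ∈ range (k + 1) | Odd ((k - j).choose j)} :=
          card_le_card fun j hj => by
            simp only [mem_filter, mem_range] at hj ⊢
            exact ⟨by omega, hj.2.2.2⟩
      _ = stern k := card_filter_odd_choose_eq_stern k
  · exact Finset.sup_le fun m hm => stern_le_fib (mem_range.1 hm)

/-- Let `q = 2^r` and, for `k ≥ 0` and `l ∈ ℤ` with `k + 2 ≡ 2l (mod q-1)`, let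
`P(k+2, l, q) = { j ∈ ℕ : 2j < k, j ≡ l - 1 (mod q-1), C(k-j, j) odd }`. Then
`#P(k+2, l, q) ≤ a_k` (Stern-Brocot sequence), and `max_{k ≤ 2^N - 1} a_k ≤ F_{N+1}`
(Fibonacci); hence `#P(k+2, l, q) = O(k^{log₂ φ})`. -/
theorem stmt18 (r : ℕ) (hr : 1 ≤ r) (k : ℕ) (l : ℤ)
    (hcong : ((k : ℤ) + 2) % ((2 : ℤ) ^ r - 1) = (2 * l) % ((2 : ℤ) ^ r - 1)) (N : ℕ) :
    ((Finset.range k).filter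
        (fun j => 2 * j < k ∧ (j : ℤ) % ((2 : ℤ) ^ r - 1) = (l - 1) % ((2 : ℤ) ^ r - 1) ∧
          Odd (Nat.choose (k - j) j))).card ≤ stern k ∧
      (Finset.range (2 ^ N)).sup stern ≤ Nat.fib (N + 1) :=
  stmt18_general r k l N
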